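/- Let P_close be a finite set of points in a metric space with d(p,c) ≤ (ε/(6z))·r for all p ∈ P_close, where z ≥ 1, 0 < ε < 1, r > 0. Then for every point s, |cost_z(P_close, s) − |P_close|·d(c,s)^z| ≤ (ε/2)·cost_z(P_close, s) + (6z/ε)^(z−1)·|P_close|·(εr/(6z))^z, and the second term equals (ε/(6z))·|P_close|·r^z ≤ (ε/2)·|P_close|·r^z. -/

import Mathlib

/-!
Collapsing `p` onto `c` moves `d(p, s)` by at most `d(p, c)`, so it suffices to have, for
`a, b ≥ 0`, `|a ^ z - b ^ z| ≤ t a ^ z + (3z/t) ^ (z-1) |a - b| ^ z` (here `t = ε/2`). This follows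
from convexity of `x ↦ x ^ z` with the weights `1/(1+σ)` and `σ/(1+σ)`, `σ = t/(2z)`: it gives
`(b + d) ^ z ≤ (1 + σ) ^ (z-1) b ^ z + ((1 + σ)/σ) ^ (z-1) d ^ z`, and
`(1 + σ) ^ (z-1) ≤ exp (t/2) ≤ 1 + t`. Summing over the points bounds each `d(p, c) ^ z`
by `(εr/(6z)) ^ z`.
-/

open Real

lemma add_rpow_le_inv_rpow_mul_add {p a b u v : ℝ} (hp : 1 ≤ p) (ha : 0 ≤ a) (hb : 0 ≤ b)
    (hu : 0 < u) (hv : 0 < v) (huv : u + v = 1) :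
    (a + b) ^ p ≤ u⁻¹ ^ (p - 1) * a ^ p + v⁻¹ ^ (p - 1) * b ^ p := by
  have hweight : ∀ {w x : ℝ}, 0 < w → 0 ≤ x → w * (x / w) ^ p = w⁻¹ ^ (p - 1) * x ^ p := by
    intro w x hw hx
    rw [div_rpow hx hw.le, inv_rpow hw.le, rpow_sub_one hw.ne']
    field_simp
  have hconv := (convexOn_rpow hp).2 (Set.mem_Ici.2 (div_nonneg ha hu.le))
    (Set.mem_Ici.2 (div_nonneg hb hv.le)) hu.le hv.le huv
  simp only [smul_eq_mul, mul_div_cancel₀ _ hu.ne', mul_div_cancel₀ _ hv.ne'] at hconv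
  rwa [hweight hu ha, hweight hv hb] at hconv

lemma one_add_div_rpow_sub_one_le {z t : ℝ} (hz : 1 ≤ z) (ht0 : 0 ≤ t) (ht1 : t ≤ 1) :
    (1 + t / (2 * z)) ^ (z - 1) ≤ 1 + t := by
  have hz0 : 0 < z := by linarith
  have hσ0 : 0 ≤ t / (2 * z) := div_nonneg ht0 (by linarith)
  calc (1 + t / (2 * z)) ^ (z - 1) ≤ exp (t / (2 * z)) ^ (z - 1) := by
        gcongr
        linarith [add_one_le_exp (t / (2 * z))]
    _ ≤ exp (t / (2 * z)) ^ z :=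
        rpow_le_rpow_of_exponent_le (one_le_exp hσ0) (by linarith)
    _ = exp (t / 2) := by
        rw [← exp_mul]
        field_simp
    _ ≤ 1 + t := by
        have h := abs_exp_sub_one_le (x := t / 2) (by rw [abs_of_nonneg (by linarith)]; linarith)
        rw [abs_of_nonneg (by linarith : 0 ≤ t / 2)] at h
        linarith [le_abs_self (exp (t / 2) - 1)]

lemma add_rpow_le_one_add_mul_rpow_add {z t b d : ℝ} (hz : 1 ≤ z) (ht0 : 0 < t) (ht1 : t ≤ 1)
    (hb : 0 ≤ b) (hd : 0 ≤ d) :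
    (b + d) ^ z ≤ (1 + t) * b ^ z + (3 * z / t) ^ (z - 1) * d ^ z := by
  have hz0 : 0 < z := by linarith
  set σ := t / (2 * z) with hσ
  have hσ0 : 0 < σ := by positivity
  have hsplit := add_rpow_le_inv_rpow_mul_add hz hb hd (inv_pos.2 (by positivity : 0 < 1 + σ))
    (by positivity : 0 < σ / (1 + σ)) (by field_simp)
  rw [inv_inv, inv_div] at hsplit
  have hratio : (1 + σ) / σ ≤ 3 * z / t := by
    rw [hσ, div_le_div_iff₀ (by positivity) ht0]
    field_simp
    nlinarith
  calc (b + d) ^ z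
      ≤ (1 + σ) ^ (z - 1) * b ^ z + ((1 + σ) / σ) ^ (z - 1) * d ^ z := hsplit
    _ ≤ (1 + t) * b ^ z + (3 * z / t) ^ (z - 1) * d ^ z := by
        gcongr
        exact one_add_div_rpow_sub_one_le hz ht0.le ht1

lemma abs_rpow_sub_rpow_le {z t a b : ℝ} (hz : 1 ≤ z) (ht0 : 0 < t) (ht1 : t ≤ 1)
    (ha : 0 ≤ a) (hb : 0 ≤ b) :
    |a ^ z - b ^ z| ≤ t * a ^ z + (3 * z / t) ^ (z - 1) * |a - b| ^ z := by
  have hz0 : 0 < z := by linarith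
  have hgrow : ∀ {x y : ℝ}, 0 ≤ x → 0 ≤ y →
      x ^ z ≤ (1 + t) * y ^ z + (3 * z / t) ^ (z - 1) * |x - y| ^ z := fun {x y} hx hy =>
    (rpow_le_rpow hx (by linarith [le_abs_self (x - y)]) hz0.le).trans
      (add_rpow_le_one_add_mul_rpow_add hz ht0 ht1 hy (abs_nonneg _))
  have herr : 0 ≤ (3 * z / t) ^ (z - 1) * |a - b| ^ z := by positivity
  rw [abs_sub_le_iff]
  constructor
  · rcases le_total a b with hab | hba
    · have : a ^ z ≤ b ^ z := rpow_le_rpow ha hab hz0.le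
      nlinarith [rpow_nonneg ha z]
    · have : b ^ z ≤ a ^ z := rpow_le_rpow hb hba hz0.le
      nlinarith [hgrow ha hb]
  · have := hgrow hb ha
    rw [abs_sub_comm] at this
    linarith

lemma abs_dist_rpow_sub_dist_rpow_le {X : Type*} [PseudoMetricSpace X] {z t : ℝ} (hz : 1 ≤ z)
    (ht0 : 0 < t) (ht1 : t ≤ 1) (p c s : X) :
    |dist p s ^ z - dist c s ^ z| ≤ t * dist p s ^ z + (3 * z / t) ^ (z - 1) * dist p c ^ z := by
  refine (abs_rpow_sub_rpow_le hz ht0 ht1 dist_nonneg dist_nonneg).trans ?_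
  gcongr
  exact abs_dist_sub_le p c s

lemma abs_sum_dist_rpow_sub_card_mul_le {X : Type*} [PseudoMetricSpace X] {z t : ℝ} (hz : 1 ≤ z)
    (ht0 : 0 < t) (ht1 : t ≤ 1) (P : Finset X) (c s : X) :
    |∑ p ∈ P, dist p s ^ z - P.card * dist c s ^ z|
      ≤ t * ∑ p ∈ P, dist p s ^ z + (3 * z / t) ^ (z - 1) * ∑ p ∈ P, dist p c ^ z := by
  calc |∑ p ∈ P, dist p s ^ z - P.card * dist c s ^ z|
      = |∑ p ∈ P, (dist p s ^ z - dist c s ^ z)| := by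
        rw [Finset.sum_sub_distrib, Finset.sum_const, nsmul_eq_mul]
    _ ≤ ∑ p ∈ P, |dist p s ^ z - dist c s ^ z| := Finset.abs_sum_le_sum_abs _ _
    _ ≤ ∑ p ∈ P, (t * dist p s ^ z + (3 * z / t) ^ (z - 1) * dist p c ^ z) :=
        Finset.sum_le_sum fun p _ => abs_dist_rpow_sub_dist_rpow_le hz ht0 ht1 p c s
    _ = t * ∑ p ∈ P, dist p s ^ z + (3 * z / t) ^ (z - 1) * ∑ p ∈ P, dist p c ^ z := by
        rw [Finset.sum_add_distrib, Finset.mul_sum, Finset.mul_sum]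

lemma rpow_sub_one_mul_div_rpow {A r z : ℝ} (hA : 0 < A) (hr : 0 ≤ r) :
    A ^ (z - 1) * (r / A) ^ z = r ^ z / A := by
  rw [div_rpow hr hA.le, rpow_sub_one hA.ne']
  field_simp

theorem close_points_collapse_error
    {X : Type*} [MetricSpace X] (c s : X) (z ε r : ℝ)
    (hz : 1 ≤ z) (hε0 : 0 < ε) (hε1 : ε < 1) (hr : 0 < r)
    (Pclose : Finset X)
    (hclose : ∀ p ∈ Pclose, dist p c ≤ (ε / (6 * z)) * r) :
    |(∑ p ∈ Pclose, dist p s ^ z) - (Pclose.card : ℝ) * dist c s ^ z|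
        ≤ (ε / 2) * (∑ p ∈ Pclose, dist p s ^ z)
          + (6 * z / ε) ^ (z - 1) * (Pclose.card : ℝ) * (ε * r / (6 * z)) ^ z ∧
    (6 * z / ε) ^ (z - 1) * (ε * r / (6 * z)) ^ z = (ε / (6 * z)) * r ^ z ∧
    (ε / (6 * z)) * (Pclose.card : ℝ) * r ^ z
        ≤ (ε / 2) * (Pclose.card : ℝ) * r ^ z := by
  have hz0 : 0 < z := by linarith
  refine ⟨?_, ?_, ?_⟩
  · have hcost := abs_sum_dist_rpow_sub_card_mul_le hz (half_pos hε0) (by linarith) Pclose c s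
    rw [show 3 * z / (ε / 2) = 6 * z / ε by field_simp; ring] at hcost
    have hfar : ∑ p ∈ Pclose, dist p c ^ z ≤ Pclose.card * (ε * r / (6 * z)) ^ z := by
      simpa using Finset.sum_le_card_nsmul _ _ _ fun p hp =>
        rpow_le_rpow dist_nonneg ((hclose p hp).trans_eq (by ring)) hz0.le
    calc _ ≤ _ := hcost
      _ ≤ _ := by rw [mul_assoc ((6 * z / ε) ^ (z - 1))]; gcongr
  · rw [show ε * r / (6 * z) = r / (6 * z / ε) by field_simp,
      rpow_sub_one_mul_div_rpow (by positivity) hr.le]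
    field_simp
  · gcongr
    linarith
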